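/- arXiv:2305.19150 — 6 statements merged into one kernel-verified Lean document; each statement's English description precedes it below -/
import Mathlib

section
/- Suppose v_A > v_B > 0 and v_T > 0. Consider a two-stage game: first a second-price order-flow auction (OFA) for a transaction of value v_T, then a second-price PBS auction where the OFA winner's block value is their top-of-block value plus v_T and the loser's value is just their top-of-block value. In the backward-induction equilibrium, builder A wins both auctions, pays a total of max(v_T + 2v_B - v_A, v_B), and earns total surplus min(2(v_A - v_B), v_A + v_T - v_B). -/
/-- Two-stage game with deterministic values `v_A > v_B > 0`, `v_T > 0`.
In the backward-induction equilibrium of the second-price OFA followed by the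
second-price PBS auction, builder A wins both auctions: A's willingness to pay in
the OFA strictly exceeds B's, the total amount A pays (OFA price plus PBS price)
is `max (v_T + 2 v_B - v_A) v_B`, and A's total surplus is
`min (2 (v_A - v_B)) (v_A + v_T - v_B)`. -/
theorem stmt_1 (vA vB vT : ℝ) (hAB : vA > vB) (hB : vB > 0) (hT : vT > 0)
    -- builder x's PBS surplus if x holds the transaction (value v_x + v_T vs opponent v_y):
    -- second-price auction surplus is max (value - opponent value) 0
    (wtpA wtpB ofaPrice pbsPrice total surplus : ℝ)
    -- willingness to pay in the OFA = PBS surplus if winning OFA − PBS surplus if losing OFA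
    (hwtpA : wtpA = max ((vA + vT) - vB) 0 - max (vA - (vB + vT)) 0)
    (hwtpB : wtpB = max ((vB + vT) - vA) 0 - max (vB - (vA + vT)) 0)
    (hofa : ofaPrice = wtpB)          -- A wins the OFA at B's willingness to pay
    (hpbs : pbsPrice = vB)            -- A then wins the PBS auction at B's value
    (htotal : total = ofaPrice + pbsPrice)
    (hsurp : surplus = (vA + vT) - total) :
    wtpA > wtpB ∧ total = max (vT + 2 * vB - vA) vB ∧
      surplus = min (2 * (vA - vB)) (vA + vT - vB) := by
  rw [hpbs] at htotal
  subst hwtpA hwtpB hofa htotal hsurp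
  rcases le_total (vB + vT) vA with h | h
  · rw [max_eq_left (by linarith : (0:ℝ) ≤ (vA + vT) - vB),
      max_eq_left (by linarith : (0:ℝ) ≤ vA - (vB + vT)),
      max_eq_right (by linarith : (vB + vT) - vA ≤ 0),
      max_eq_right (by linarith : vB - (vA + vT) ≤ 0),
      max_eq_right (by linarith : vT + 2 * vB - vA ≤ vB),
      min_eq_right (by linarith : vA + vT - vB ≤ 2 * (vA - vB))]
    refine ⟨by linarith, by ring, by ring⟩
  · rw [max_eq_left (by linarith : (0:ℝ) ≤ (vA + vT) - vB),
      max_eq_right (by linarith : vA - (vB + vT) ≤ 0),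
      max_eq_left (by linarith : (0:ℝ) ≤ (vB + vT) - vA),
      max_eq_right (by linarith : vB - (vA + vT) ≤ 0),
      max_eq_left (by linarith : vB ≤ vT + 2 * vB - vA),
      min_eq_left (by linarith : 2 * (vA - vB) ≤ vA + vT - vB)]
    refine ⟨by linarith, by ring, by ring⟩
end

section
/- In the two-stage game with deterministic values, if v_A > v_B + v_T then builder B's value for winning the OFA is 0 (B loses the PBS auction regardless of the OFA outcome), so A wins the OFA at price 0 and then wins the PBS auction at price v_B, for total surplus v_A + v_T - v_B. -/
/-- Deterministic two-stage game with `v_A > v_B + v_T`. Builder B's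
value for winning the OFA (PBS surplus winning minus PBS surplus losing) is `0`,
so A wins the OFA at price `0`, then wins the PBS auction at price `v_B`, for
total surplus `v_A + v_T - v_B`. -/
theorem stmt_2 (vA vB vT : ℝ) (hAB : vA > vB) (hB : vB ≥ 0) (hT : vT > 0)
    (hbig : vA > vB + vT)
    (wtpB : ℝ)
    -- B's PBS surplus if B wins the OFA minus B's PBS surplus if B loses it
    (hwtpB : wtpB = max ((vB + vT) - vA) 0 - max (vB - (vA + vT)) 0) :
    wtpB = 0 ∧ (vA + vT) - (0 + vB) = vA + vT - vB := by
  constructor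
  · rw [hwtpB, max_eq_right (by linarith), max_eq_right (by linarith)]
    ring
  · ring
end

section
/- In the two-stage game with deterministic values and v_B < v_A ≤ v_B + v_T, builder A's willingness to pay in the OFA is v_A + v_T - v_B and builder B's is v_B + v_T - v_A, and the former strictly exceeds the latter; hence A wins the OFA at price v_B + v_T - v_A. -/
/-- Deterministic two-stage game with `v_B < v_A ≤ v_B + v_T`.
Builder A's willingness to pay in the OFA is `v_A + v_T - v_B`, builder B's is
`v_B + v_T - v_A`, the former strictly exceeds the latter; hence A wins the
second-price OFA at price `v_B + v_T - v_A`. -/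
theorem stmt_3 (vA vB vT : ℝ) (hBA : vB < vA) (hAle : vA ≤ vB + vT) (hT : vT > 0)
    (wtpA wtpB : ℝ)
    -- willingness to pay = PBS surplus winning the OFA − PBS surplus losing the OFA
    (hwtpA : wtpA = max ((vA + vT) - vB) 0 - max (vA - (vB + vT)) 0)
    (hwtpB : wtpB = max ((vB + vT) - vA) 0 - max (vB - (vA + vT)) 0) :
    wtpA = vA + vT - vB ∧ wtpB = vB + vT - vA ∧ wtpA > wtpB := by
  rw [hwtpA, hwtpB]
  rw [max_eq_left (by linarith), max_eq_right (by linarith),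
      max_eq_left (by linarith), max_eq_right (by linarith)]
  refine ⟨by ring, by ring, by linarith⟩
end

section
/- For independent exponentials with rates λ_A < λ_B and any v_T > 0, the OFA value v_{T,A} = ∫_0^∞ ∫_0^{v_A} [F_B(v + v_T) - F_B(max(v - v_T, 0))] dv dF_A(v_A) equals [λ_A(1 - e^{-v_T λ_B}) + λ_B(1 - e^{-v_T λ_A})] / (λ_A² + λ_A λ_B). -/
/-!
Integrating by parts against the exponential density turns the expectation of the primitive
`∫₀^{v_A} g` into the Laplace transform `∫₀^∞ g(v) e^{-λ_A v} dv`, since `e^{-λ_A v}` is the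
survival function of `v_A`; the boundary terms vanish because the primitive of a bounded
`g` grows only linearly. For the gap `g(v) = F_B(v + v_T) - F_B(max (v - v_T) 0)` of the
exponential CDF the transform is elementary: split at `v_T`, where `max (v - v_T) 0` stops
being zero, and integrate exponentials.
-/

open Real MeasureTheory Set intervalIntegral Filter

theorem integral_exp_neg_mul_Ioi {l : ℝ} (hl : 0 < l) (c : ℝ) :
    ∫ x in Ioi c, exp (-(l * x)) = exp (-(l * c)) / l := by
  simpa [neg_div_neg_eq] using integral_exp_mul_Ioi (neg_neg_of_pos hl) c

theorem integrableOn_exp_neg_mul_Ioi {l : ℝ} (hl : 0 < l) (c : ℝ) :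
    IntegrableOn (fun x => exp (-(l * x))) (Ioi c) := by
  simpa using exp_neg_integrableOn_Ioi c hl

theorem integrableOn_mul_exp_neg_mul_Ioi {l : ℝ} (hl : 0 < l) :
    IntegrableOn (fun x => x * exp (-(l * x))) (Ioi 0) := by
  simpa using integrableOn_rpow_mul_exp_neg_mul_rpow (s := 1) (p := 1) (by norm_num) one_pos hl

theorem tendsto_mul_exp_neg_mul_atTop {l : ℝ} (hl : 0 < l) :
    Tendsto (fun x => x * exp (-(l * x))) atTop (nhds 0) := by
  simpa using tendsto_rpow_mul_exp_neg_mul_atTop_nhds_zero 1 l hl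

theorem hasDerivAt_neg_exp_neg_mul (l x : ℝ) :
    HasDerivAt (fun x => -exp (-(l * x))) (l * exp (-(l * x))) x := by
  simpa [mul_comm] using (((hasDerivAt_id x).const_mul l).fun_neg.exp).fun_neg

theorem abs_intervalIntegral_le_of_abs_le {g : ℝ → ℝ} {C x : ℝ} (hx : 0 ≤ x)
    (hgC : ∀ v, 0 ≤ v → |g v| ≤ C) : |∫ v in 0..x, g v| ≤ C * x := by
  simpa [abs_of_nonneg hx] using norm_integral_le_of_norm_le_const (a := 0) (b := x) (f := g)
    (C := C) fun v hv => hgC v (uIoc_of_le hx ▸ hv).1.le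

theorem integral_Ioi_primitive_mul_exp_density {g : ℝ → ℝ} {l C : ℝ} (hg : Continuous g)
    (hgC : ∀ v, 0 ≤ v → |g v| ≤ C) (hl : 0 < l) :
    ∫ x in Ioi 0, (∫ v in 0..x, g v) * (l * exp (-(l * x))) =
      ∫ x in Ioi 0, g x * exp (-(l * x)) := by
  set G : ℝ → ℝ := fun x => ∫ v in 0..x, g v
  have hG : ∀ x, HasDerivAt G (g x) x := fun x =>
    (hg.integral_hasStrictDerivAt 0 x).hasDerivAt
  have hGC : ∀ x, 0 ≤ x → |G x| ≤ C * x := fun x hx => abs_intervalIntegral_le_of_abs_le hx hgC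
  have hGE : Continuous (G * fun x => -exp (-(l * x))) :=
    (continuous_iff_continuousAt.2 fun x => (hG x).continuousAt).mul (by fun_prop)
  have hGE_le : ∀ x, 0 ≤ x →
      ‖(G * fun x => -exp (-(l * x))) x‖ ≤ C * (x * exp (-(l * x))) := by
    intro x hx
    simp only [Pi.mul_apply, norm_mul, norm_neg, Real.norm_eq_abs, abs_of_pos (exp_pos _)]
    calc |G x| * exp (-(l * x)) ≤ C * x * exp (-(l * x)) := by gcongr; exact hGC x hx
      _ = _ := by ring
  have hparts := integral_Ioi_mul_deriv_eq_deriv_mul (a := 0) (a' := 0) (b' := 0)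
    (fun x _ => hG x) (fun x _ => hasDerivAt_neg_exp_neg_mul l x) ?_ ?_ ?_ ?_
  · simpa [MeasureTheory.integral_neg] using hparts
  · refine ((integrableOn_mul_exp_neg_mul_Ioi hl).const_mul (C * l)).mono'
      (by fun_prop) ((ae_restrict_iff' measurableSet_Ioi).2 (.of_forall fun x hx => ?_))
    simp only [Pi.mul_apply, norm_mul, Real.norm_eq_abs, abs_of_pos hl, abs_of_pos (exp_pos _)]
    calc |G x| * (l * exp (-(l * x))) ≤ C * x * (l * exp (-(l * x))) := by
          gcongr; exact hGC x (le_of_lt hx)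
      _ = _ := by ring
  · refine ((integrableOn_exp_neg_mul_Ioi hl 0).const_mul C).mono'
      (by fun_prop) ((ae_restrict_iff' measurableSet_Ioi).2 (.of_forall fun x hx => ?_))
    simp only [Pi.mul_apply, norm_mul, norm_neg, Real.norm_eq_abs, abs_of_pos (exp_pos _)]
    gcongr
    exact hgC x (le_of_lt hx)
  · exact (hGE.tendsto' 0 0 (by simp [G])).mono_left nhdsWithin_le_nhds
  · refine squeeze_zero_norm' ((eventually_ge_atTop 0).mono hGE_le) ?_
    simpa using (tendsto_mul_exp_neg_mul_atTop hl).const_mul C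

theorem integral_exp_neg_mul_max_sub_mul_exp_neg_mul {a b t : ℝ} (ha : 0 < a) (hb : 0 < b)
    (ht : 0 ≤ t) :
    ∫ x in Ioi 0, exp (-(b * max (x - t) 0)) * exp (-(a * x)) =
      (1 - exp (-(a * t))) / a + exp (-(a * t)) / (a + b) := by
  have hab : 0 < a + b := add_pos ha hb
  have hle : EqOn (fun x => exp (-(b * max (x - t) 0)) * exp (-(a * x)))
      (fun x => exp (-(a * x))) (uIcc 0 t) := fun x hx => by
    rw [uIcc_of_le ht] at hx
    simp [max_eq_right (sub_nonpos.2 hx.2)]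
  have hgt : EqOn (fun x => exp (-(b * max (x - t) 0)) * exp (-(a * x)))
      (fun x => exp (b * t) * exp (-((a + b) * x))) (Ioi t) := fun x hx => by
    simp only [max_eq_left (sub_nonneg.2 (mem_Ioi.1 hx).le), ← exp_add]
    congr 1
    ring
  rw [← integral_interval_add_Ioi' (Continuous.intervalIntegrable (by fun_prop) 0 t)
      (IntegrableOn.congr_fun ((integrableOn_exp_neg_mul_Ioi hab t).const_mul _) hgt.symm
        measurableSet_Ioi),
    integral_congr hle, setIntegral_congr_fun measurableSet_Ioi hgt,
    ← integral_Ioi_sub_Ioi (integrableOn_exp_neg_mul_Ioi ha 0) ht,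
    MeasureTheory.integral_const_mul, integral_exp_neg_mul_Ioi ha, integral_exp_neg_mul_Ioi ha,
    integral_exp_neg_mul_Ioi hab, mul_zero, neg_zero, exp_zero, mul_div_assoc', ← exp_add]
  rw [show b * t + -((a + b) * t) = -(a * t) by ring]
  ring

/-- `F(v + t) - F(max (v - t) 0)` for the CDF `F(x) = 1 - e^{-b x}` of the exponential law. -/
noncomputable def expCdfGap (b t v : ℝ) : ℝ := exp (-(b * max (v - t) 0)) - exp (-(b * (v + t)))

theorem continuous_expCdfGap (b t : ℝ) : Continuous (expCdfGap b t) := by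
  unfold expCdfGap
  fun_prop

theorem abs_expCdfGap_le_one {b t : ℝ} (hb : 0 ≤ b) (ht : 0 ≤ t) (v : ℝ) (hv : 0 ≤ v) :
    |expCdfGap b t v| ≤ 1 :=
  abs_sub_le_of_nonneg_of_le (exp_pos _).le
    (exp_le_one_iff.2 (by nlinarith [le_max_right (v - t) 0])) (exp_pos _).le
    (exp_le_one_iff.2 (by nlinarith))

theorem integral_expCdfGap_mul_exp_neg_mul {a b t : ℝ} (ha : 0 < a) (hb : 0 < b) (ht : 0 ≤ t) :
    ∫ x in Ioi 0, expCdfGap b t x * exp (-(a * x)) =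
      (1 - exp (-(a * t))) / a + (exp (-(a * t)) - exp (-(b * t))) / (a + b) := by
  have hsplit : ∀ x, expCdfGap b t x * exp (-(a * x)) =
      exp (-(b * max (x - t) 0)) * exp (-(a * x)) - exp (-(b * t)) * exp (-((a + b) * x)) :=
    fun x => by
      simp only [expCdfGap, sub_mul, ← exp_add]
      congr 2
      ring
  have hmax : IntegrableOn (fun x => exp (-(b * max (x - t) 0)) * exp (-(a * x))) (Ioi 0) := by
    refine (integrableOn_exp_neg_mul_Ioi ha 0).mono' (by fun_prop) (.of_forall fun x => ?_)
    rw [norm_of_nonneg (by positivity)]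
    exact mul_le_of_le_one_left (exp_pos _).le
      (exp_le_one_iff.2 (by nlinarith [le_max_right (x - t) 0]))
  simp only [hsplit]
  rw [integral_sub hmax ((integrableOn_exp_neg_mul_Ioi (add_pos ha hb) 0).const_mul _),
    integral_exp_neg_mul_max_sub_mul_exp_neg_mul ha hb ht, MeasureTheory.integral_const_mul,
    integral_exp_neg_mul_Ioi (add_pos ha hb)]
  simp only [mul_zero, neg_zero, exp_zero]
  ring

/-- For independent exponentials with rates `λ_A < λ_B` and `v_T > 0`,
the OFA value
`v_{T,A} = ∫_0^∞ ∫_0^{v_A} (F_B(v + v_T) - F_B(max (v - v_T) 0)) dv dF_A(v_A)`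
equals `(λ_A (1 - e^{-v_T λ_B}) + λ_B (1 - e^{-v_T λ_A})) / (λ_A² + λ_A λ_B)`,
where `F_B(t) = 1 - e^{-λ_B t}` for `t ≥ 0` and `0` for `t < 0`. -/
theorem stmt_11 (lA lB vT : ℝ) (hA : 0 < lA) (hAB : lA < lB) (hT : 0 < vT) :
    ∫ vA in Ioi (0:ℝ),
        (∫ v in (0:ℝ)..vA,
            ((1 - exp (-(lB * (v + vT)))) - (1 - exp (-(lB * max (v - vT) 0)))))
          * (lA * exp (-(lA * vA)))
      = (lA * (1 - exp (-(vT * lB))) + lB * (1 - exp (-(vT * lA))))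
          / (lA ^ 2 + lA * lB) := by
  have hB : 0 < lB := hA.trans hAB
  simp only [sub_sub_sub_cancel_left, ← expCdfGap.eq_1]
  rw [integral_Ioi_primitive_mul_exp_density (continuous_expCdfGap lB vT)
      (abs_expCdfGap_le_one hB.le hT.le) hA, integral_expCdfGap_mul_exp_neg_mul hA hB hT.le]
  field_simp
  ring
end

section
/- For exponential rates 0 < λ_A < λ_B and v_T > 0, builder A's expected profit in Scenario 2, namely (v_{T,A} - v_{T,B}) + ∫_0^∞ ∫_0^{v_A} F_B(v + v_T) dv dF_A(v_A), strictly exceeds their Scenario-1 profit λ_B/(λ_A(λ_A + λ_B)). Moreover the difference equals (λ_B - λ_A)[λ_A(1 - e^{-v_T λ_B}) + λ_B(1 - e^{-v_T λ_A})] / (λ_A λ_B (λ_A + λ_B)) + (1 - e^{-v_T λ_B})/(λ_A + λ_B), a sum of strictly positive terms. -/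
/-!
After the inner integration, `∫₀^x F_B(v + v_T) dv = x - (e^{-λ_B v_T} / λ_B) (1 - e^{-λ_B x})`,
the expected PBS surplus is a combination of the mean `1/λ_A` of the exponential law and the
Laplace transforms `∫₀^∞ e^{-c x} dx = 1/c` at `c = λ_A` and `c = λ_A + λ_B`; it equals
`1/λ_A - e^{-λ_B v_T}/(λ_A + λ_B)`. The difference of profits is then an identity of rational
functions in `λ_A, λ_B, e^{-v_T λ_A}, e^{-v_T λ_B}`, and each of its two terms is positive because
`λ_A < λ_B` and `e^{-v_T λ} < 1`.
-/

open Real MeasureTheory Set intervalIntegral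

lemma integral_exp_neg_mul_Ioi_zero {c : ℝ} (hc : 0 < c) :
    ∫ x in Ioi (0:ℝ), exp (-(c * x)) = 1 / c := by
  simpa [neg_mul, neg_div, div_neg] using integral_exp_mul_Ioi (a := -c) (by linarith) 0

lemma integrableOn_exp_neg_mul_Ioi_zero {c : ℝ} (hc : 0 < c) :
    IntegrableOn (fun x => exp (-(c * x))) (Ioi (0:ℝ)) := by
  simpa [neg_mul] using integrableOn_exp_mul_Ioi (a := -c) (by linarith) 0

lemma integral_mul_exp_neg_mul_Ioi_zero {c : ℝ} (hc : 0 < c) :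
    ∫ x in Ioi (0:ℝ), x * exp (-(c * x)) = 1 / c ^ 2 := by
  have h := integral_rpow_mul_exp_neg_mul_Ioi two_pos hc
  norm_num [Gamma_two] at h
  simpa [div_pow] using h

lemma integrableOn_mul_exp_neg_mul_Ioi_zero {c : ℝ} (hc : 0 < c) :
    IntegrableOn (fun x => x * exp (-(c * x))) (Ioi (0:ℝ)) := by
  simpa [neg_mul] using
    integrableOn_rpow_mul_exp_neg_mul_rpow (s := 1) (p := 1) (by norm_num) one_pos hc

lemma integral_one_sub_exp_neg_mul_add {b : ℝ} (hb : b ≠ 0) (t a : ℝ) :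
    ∫ v in (0:ℝ)..a, (1 - exp (-(b * (v + t))))
      = a - exp (-(b * t)) / b * (1 - exp (-(b * a))) := by
  have hderiv : ∀ v ∈ uIcc 0 a, HasDerivAt (fun v => v + exp (-(b * (v + t))) / b)
      (1 - exp (-(b * (v + t)))) v := by
    intro v _
    refine ((hasDerivAt_id' v).add
      ((((hasDerivAt_id' v).add_const t).const_mul b).neg.exp.div_const b)).congr_deriv ?_
    simp only [Pi.neg_apply]
    field_simp
    ring
  rw [integral_eq_sub_of_hasDerivAt hderiv (by apply Continuous.intervalIntegrable; fun_prop),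
    show -(b * (a + t)) = -(b * t) + -(b * a) by ring, exp_add, zero_add t]
  ring

lemma integral_Ioi_integral_one_sub_exp_mul_exp {a b : ℝ} (ha : 0 < a) (hb : 0 < b) (t : ℝ) :
    ∫ x in Ioi (0:ℝ), (∫ v in (0:ℝ)..x, (1 - exp (-(b * (v + t))))) * (a * exp (-(a * x)))
      = 1 / a - exp (-(b * t)) / (a + b) := by
  set C := exp (-(b * t)) / b with hC
  have hsplit : ∀ x, (∫ v in (0:ℝ)..x, (1 - exp (-(b * (v + t))))) * (a * exp (-(a * x)))
      = (a * (x * exp (-(a * x))) - a * C * exp (-(a * x))) + a * C * exp (-((a + b) * x)) := by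
    intro x
    rw [integral_one_sub_exp_neg_mul_add hb.ne',
      show -((a + b) * x) = -(a * x) + -(b * x) by ring, exp_add]
    ring
  have hab : 0 < a + b := by linarith
  have hmean := integrableOn_mul_exp_neg_mul_Ioi_zero ha
  have hexpA := integrableOn_exp_neg_mul_Ioi_zero ha
  have hexpAB := integrableOn_exp_neg_mul_Ioi_zero hab
  have hdiff : IntegrableOn (fun x => a * (x * exp (-(a * x))) - a * C * exp (-(a * x)))
      (Ioi 0) :=
    (hmean.const_mul a).sub (hexpA.const_mul _)
  simp_rw [hsplit]
  rw [MeasureTheory.integral_add hdiff (hexpAB.const_mul _),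
    MeasureTheory.integral_sub (hmean.const_mul a) (hexpA.const_mul _),
    MeasureTheory.integral_const_mul, MeasureTheory.integral_const_mul,
    MeasureTheory.integral_const_mul, integral_mul_exp_neg_mul_Ioi_zero ha,
    integral_exp_neg_mul_Ioi_zero ha, integral_exp_neg_mul_Ioi_zero hab, hC]
  field_simp
  ring

/-- For exponential rates `0 < λ_A < λ_B` and `v_T > 0`, builder A's
expected Scenario-2 profit `(v_{T,A} - v_{T,B}) + ∫_0^∞ ∫_0^{v_A} F_B(v + v_T) dv dF_A(v_A)`
strictly exceeds the Scenario-1 profit `λ_B / (λ_A (λ_A + λ_B))`, and the difference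
equals the stated sum of strictly positive terms. -/
theorem stmt_13 (lA lB vT : ℝ) (hA : 0 < lA) (hAB : lA < lB) (hT : 0 < vT)
    (vTA vTB profit2 : ℝ)
    (hvTA : vTA = (lA * (1 - exp (-(vT * lB))) + lB * (1 - exp (-(vT * lA))))
        / (lA * (lA + lB)))
    (hvTB : vTB = (lB * (1 - exp (-(vT * lA))) + lA * (1 - exp (-(vT * lB))))
        / (lB * (lA + lB)))
    (hprofit : profit2 = (vTA - vTB) +
        ∫ vA in Ioi (0:ℝ),
          (∫ v in (0:ℝ)..vA, (1 - exp (-(lB * (v + vT))))) * (lA * exp (-(lA * vA)))) :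
    profit2 > lB / (lA * (lA + lB)) ∧
      profit2 - lB / (lA * (lA + lB)) =
        (lB - lA) * (lA * (1 - exp (-(vT * lB))) + lB * (1 - exp (-(vT * lA))))
            / (lA * lB * (lA + lB))
          + (1 - exp (-(vT * lB))) / (lA + lB) := by
  have hB : 0 < lB := hA.trans hAB
  have hdiff : profit2 - lB / (lA * (lA + lB)) =
      (lB - lA) * (lA * (1 - exp (-(vT * lB))) + lB * (1 - exp (-(vT * lA))))
          / (lA * lB * (lA + lB))
        + (1 - exp (-(vT * lB))) / (lA + lB) := by
    rw [hprofit, integral_Ioi_integral_one_sub_exp_mul_exp hA hB, hvTA, hvTB, mul_comm lB vT]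
    field_simp
    ring
  have hFA : 0 < 1 - exp (-(vT * lA)) := sub_pos.2 (exp_lt_one_iff.2 (by nlinarith))
  have hFB : 0 < 1 - exp (-(vT * lB)) := sub_pos.2 (exp_lt_one_iff.2 (by nlinarith))
  have hgap : 0 < lB - lA := sub_pos.2 hAB
  refine ⟨sub_pos.1 ?_, hdiff⟩
  rw [hdiff]
  positivity
end

section
/- Let p = λ_A/(λ_A + λ_B) ∈ (0, 1/2) parametrize the advantaged builder's relative strength with λ_A + λ_B = c fixed and v_T > 0. As p → 1/2⁻ (the advantage vanishes), the Scenario-2 winning probability 1 - p·e^{-v_T(1-p)c} converges to 1 - (1/2)e^{-v_T c/2} > 1/2, while the Scenario-1 winning probability converges to 1/2; hence an arbitrarily small top-of-block advantage yields a discontinuous jump of size (1 - e^{-v_T c/2})/2 in winning probability under private order flow. -/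
open Real Filter Topology Set

/-- With rates `λ_A = p c`, `λ_B = (1 - p) c` (`p < 1/2`, builder A
advantaged) and `v_T > 0`, as `p → 1/2⁻` the Scenario-2 winning probability
`1 - p e^{-v_T (1 - p) c}` tends to `1 - (1/2) e^{-v_T c / 2} > 1/2`, while the
Scenario-1 winning probability `1 - p` tends to `1/2`; the difference of the two
tends to the discontinuous jump `(1 - e^{-v_T c / 2}) / 2`. -/
theorem stmt_19 (c vT : ℝ) (hc : 0 < c) (hT : 0 < vT) :
    Tendsto (fun p : ℝ => 1 - p * exp (-(vT * (1 - p) * c)))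
        (nhdsWithin (1/2) (Iio (1/2))) (nhds (1 - (1/2) * exp (-(vT * c / 2)))) ∧
      (1 - (1/2) * exp (-(vT * c / 2)) > 1/2) ∧
      Tendsto (fun p : ℝ => 1 - p)
        (nhdsWithin (1/2) (Iio (1/2))) (nhds (1/2)) ∧
      Tendsto (fun p : ℝ => (1 - p * exp (-(vT * (1 - p) * c))) - (1 - p))
        (nhdsWithin (1/2) (Iio (1/2))) (nhds ((1 - exp (-(vT * c / 2))) / 2)) := by
  have h1 : Tendsto (fun p : ℝ => 1 - p * exp (-(vT * (1 - p) * c)))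
      (nhdsWithin (1/2) (Iio (1/2))) (nhds (1 - (1/2) * exp (-(vT * c / 2)))) := by
    have : ContinuousAt (fun p : ℝ => 1 - p * exp (-(vT * (1 - p) * c))) (1/2) := by
      fun_prop
    have h := this.continuousWithinAt (s := Iio (1/2:ℝ))
    simp only [ContinuousWithinAt] at h
    convert h using 2
    ring
  refine ⟨h1, ?_, ?_, ?_⟩
  · have he : exp (-(vT * c / 2)) < 1 := by
      rw [exp_lt_one_iff]; nlinarith
    linarith
  · have : ContinuousAt (fun p : ℝ => 1 - p) (1/2) := by fun_prop
    have h := this.continuousWithinAt (s := Iio (1/2:ℝ))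
    rw [ContinuousWithinAt] at h
    convert h using 2
    norm_num
  · have h2 : Tendsto (fun p : ℝ => 1 - p)
        (nhdsWithin (1/2) (Iio (1/2))) (nhds (1/2)) := by
      have : ContinuousAt (fun p : ℝ => 1 - p) (1/2) := by fun_prop
      have h := this.continuousWithinAt (s := Iio (1/2:ℝ))
      rw [ContinuousWithinAt] at h
      convert h using 2
      norm_num
    have := h1.sub h2
    convert this using 2
    ring
end
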